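/- arXiv:2202.05630 — 6 statements merged into one kernel-verified Lean document; each statement's English description precedes it below -/
import Mathlib

section
/- The Bayesian prediction strategy with prior π achieves, for every probability distribution γ with KL(γ‖π) < ∞: ∑_{t=1}^T ℓ_log(p_t, y_t) ≤ E_{θ∼γ}[∑_{t=1}^T ℓ_log(p_{θ,t}, y_t)] + KL(γ‖π), where ℓ_log(p,y) = -ln p(y). -/
/-!
The cumulative Bayes loss telescopes: `∑_t -log p_t(y_t) = -log Z_T` with
`Z_T = ∫ ∏_{t<T} p_{θ,t}(y_t) dπ(θ)`. With `f θ = ∑_t log p_{θ,t}(y_t)`, the Donsker–Varadhan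
inequality `E_γ[f] - KL(γ‖π) ≤ log ∫ e^f dπ = log Z_T` is exactly the claim.
-/

open MeasureTheory Finset

open Real in
lemma sum_range_neg_log_div_eq {Z : ℕ → ℝ} (hZ : ∀ t, 0 < Z t) (T : ℕ) :
    ∑ t ∈ range T, -log (Z (t + 1) / Z t) = log (Z 0) - log (Z T) := by
  simp_rw [log_div (hZ _).ne' (hZ _).ne', neg_sub]
  exact sum_range_sub' (fun t ↦ log (Z t)) T

namespace MeasureTheory

open Real

variable {α : Type*} {mα : MeasurableSpace α} {μ ν : Measure α} {f : α → ℝ}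

/-- Gibbs' inequality `0 ≤ KL(μ ‖ ν.tilted f)`, unfolded by `integral_llr_tilted_right`. -/
lemma integral_sub_integral_llr_le_log_integral_exp [IsProbabilityMeasure μ] [SigmaFinite ν]
    (hμν : μ ≪ ν) (hfμ : Integrable f μ) (hfν : Integrable (fun x ↦ exp (f x)) ν)
    (h_int : Integrable (llr μ ν) μ) :
    ∫ x, f x ∂μ - ∫ x, llr μ ν x ∂μ ≤ log (∫ x, exp (f x) ∂ν) := by
  have : NeZero ν := ⟨fun hν ↦ IsProbabilityMeasure.ne_zero μ
    (Measure.absolutelyContinuous_zero_iff.mp (hν ▸ hμν))⟩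
  have : IsProbabilityMeasure (ν.tilted f) := isProbabilityMeasure_tilted hfν
  have gibbs := InformationTheory.integral_llr_add_sub_measure_univ_nonneg
    (hμν.trans (absolutelyContinuous_tilted hfν)) (integrable_llr_tilted_right hμν hfμ h_int hfν)
  rw [integral_llr_tilted_right hμν hfμ hfν h_int] at gibbs
  simp only [probReal_univ] at gibbs
  linarith

end MeasureTheory

/-- The Bayesian prediction strategy with prior `π` achieves, for every probability
distribution `γ ≪ π` with finite KL divergence `KL = ∫ log (dγ/dπ) dγ`:
`∑_t -log p_t(y_t) ≤ E_{θ∼γ}[∑_t -log p_{θ,t}(y_t)] + KL(γ‖π)`. -/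
theorem bayes_logloss_KL_bound
    {Θ : Type*} [MeasurableSpace Θ] (π : Measure Θ) [IsProbabilityMeasure π]
    (T : ℕ) (p : Θ → ℕ → ℝ) (hp : ∀ θ t, 0 < p θ t)
    (Z : ℕ → ℝ) (hZ : ∀ t, Z t = ∫ θ, (∏ s ∈ Finset.range t, p θ s) ∂π)
    (hZpos : ∀ t, 0 < Z t)
    (pt : ℕ → ℝ) (hpt : ∀ t, pt t = Z (t + 1) / Z t)
    (γ : Measure Θ) [IsProbabilityMeasure γ] (hac : γ ≪ π)
    (KL : ℝ) (hKL : KL = ∫ θ, Real.log ((γ.rnDeriv π θ).toReal) ∂γ)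
    (hKLint : Integrable (fun θ => Real.log ((γ.rnDeriv π θ).toReal)) γ)
    (hlossint : Integrable (fun θ => ∑ t ∈ Finset.range T, (-Real.log (p θ t))) γ) :
    ∑ t ∈ Finset.range T, (-Real.log (pt t)) ≤
      (∫ θ, (∑ t ∈ Finset.range T, (-Real.log (p θ t))) ∂γ) + KL := by
  set L : Θ → ℝ := fun θ ↦ ∑ t ∈ range T, -Real.log (p θ t)
  have hZ0 : Z 0 = 1 := by simp [hZ 0]
  have hexp_neg_L : ∀ θ, Real.exp (-L θ) = ∏ t ∈ range T, p θ t := fun θ ↦ by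
    simp only [L, neg_neg, ← sum_neg_distrib, Real.exp_sum, Real.exp_log (hp θ _)]
  have hZT : ∫ θ, Real.exp (-L θ) ∂π = Z T := by simp only [hexp_neg_L, hZ]
  have hexp_neg_L_int : Integrable (fun θ ↦ Real.exp (-L θ)) π := by
    by_contra h
    exact (hZpos T).ne' (hZT ▸ integral_undef h)
  have dv := integral_sub_integral_llr_le_log_integral_exp (f := fun θ ↦ -L θ) hac hlossint.neg
    hexp_neg_L_int hKLint
  rw [hZT, integral_neg] at dv
  simp only [llr] at dv
  simp only [hpt, sum_range_neg_log_div_eq hZpos, hZ0, Real.log_one, hKL]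
  linarith
end

section
/- For d ≥ 1, U > 0, σ > 0 and T ≥ 1, the normalizing constant of the normalized maximum likelihood distribution for the d-dimensional normal location family restricted to the ball B(0,U) satisfies ∫_{ℝ^d} exp(-T·max(‖μ‖₂ - U, 0)²/(2σ²)) dμ = (dπ^{d/2}/Γ(d/2 + 1)) · ( U^d/d + (σ/√T) ∫_0^∞ (rσ/√T + U)^{d-1} e^{-r²/2} dr ). -/
/-!
The integrand depends on `μ` only through `‖μ‖`, so polar coordinates turn the integral into
the area `dπ^{d/2}/Γ(d/2+1)` of the unit sphere times `∫₀^∞ y^{d-1} f(y) dy`. On `(0, U]` the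
integrand `f` is `1`, contributing `U^d/d`; on `(U, ∞)` the substitution `y = U + rσ/√T` turns
the Gaussian tail into the standard one.
-/

open MeasureTheory Set Real Module

section Translation

variable {E : Type*} [NormedAddCommGroup E]

lemma integral_Ioi_comp_add_right [NormedSpace ℝ E] (g : ℝ → E) (a : ℝ) :
    ∫ x in Ioi 0, g (x + a) = ∫ x in Ioi a, g x := by
  simpa using (measurePreserving_add_right volume a).setIntegral_preimage_emb
    (measurableEmbedding_addRight a) g (Ioi a)

lemma integrableOn_Ioi_comp_add_right_iff (g : ℝ → E) (a : ℝ) :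
    IntegrableOn (fun x => g (x + a)) (Ioi 0) ↔ IntegrableOn g (Ioi a) := by
  simpa [Function.comp_def] using (measurePreserving_add_right volume a).integrableOn_comp_preimage
    (measurableEmbedding_addRight a) (f := g) (s := Ioi a)

end Translation

lemma integrable_add_pow_mul_exp_neg_mul_sq {b : ℝ} (hb : 0 < b) (a : ℝ) (n : ℕ) :
    Integrable fun x : ℝ => (x + a) ^ n * exp (-b * x ^ 2) := by
  have hmoment (k : ℕ) : Integrable fun x : ℝ => x ^ k * exp (-b * x ^ 2) := by
    simpa [rpow_natCast] using
      integrable_rpow_mul_exp_neg_mul_sq hb (s := k) (by linarith [k.cast_nonneg (α := ℝ)])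
  simp_rw [add_pow, Finset.sum_mul]
  refine integrable_finsetSum _ fun k _ => ?_
  simpa [mul_comm, mul_left_comm, mul_assoc] using (hmoment k).const_mul (a ^ (n - k) * n.choose k)

lemma integral_Ioi_pow_mul_comp_max_sub {U : ℝ} (hU : 0 ≤ U) (n : ℕ) (g : ℝ → ℝ)
    (hg : IntegrableOn (fun r => (r + U) ^ n * g r) (Ioi 0)) :
    ∫ y in Ioi 0, y ^ n * g (max (y - U) 0) =
      U ^ (n + 1) / (n + 1) * g 0 + ∫ r in Ioi 0, (r + U) ^ n * g r := by
  have h_ball : EqOn (fun y => y ^ n * g (max (y - U) 0)) (fun y => y ^ n * g 0) (Ioc 0 U) :=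
    fun y hy => by simp [max_eq_right (sub_nonpos.mpr hy.2)]
  have h_tail : EqOn (fun y => y ^ n * g (max (y - U) 0)) (fun y => y ^ n * g (y - U)) (Ioi U) :=
    fun y hy => by simp [max_eq_left (sub_nonneg.mpr (mem_Ioi.mp hy).le)]
  have h_tail_int : IntegrableOn (fun y => y ^ n * g (y - U)) (Ioi U) := by
    rw [← integrableOn_Ioi_comp_add_right_iff]
    simpa using hg
  conv_lhs => rw [← Ioc_union_Ioi_eq_Ioi hU]
  rw [setIntegral_union (Ioc_disjoint_Ioi le_rfl) measurableSet_Ioi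
      (((continuous_pow n).mul continuous_const).integrableOn_Ioc.congr_fun h_ball.symm
        measurableSet_Ioc)
      (h_tail_int.congr_fun h_tail.symm measurableSet_Ioi),
    setIntegral_congr_fun measurableSet_Ioc h_ball, setIntegral_congr_fun measurableSet_Ioi h_tail,
    ← integral_Ioi_comp_add_right, integral_mul_const, ← intervalIntegral.integral_of_le hU,
    integral_pow]
  simp

lemma InnerProductSpace.integral_fun_norm {E : Type*} [NormedAddCommGroup E]
    [InnerProductSpace ℝ E] [FiniteDimensional ℝ E] [MeasurableSpace E] [BorelSpace E]
    [Nontrivial E] (f : ℝ → ℝ) :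
    ∫ x : E, f ‖x‖ = finrank ℝ E * π ^ ((finrank ℝ E : ℝ) / 2) / Gamma (finrank ℝ E / 2 + 1) *
      ∫ y in Ioi 0, y ^ (finrank ℝ E - 1) * f y := by
  have h_sqrt_pi : √π ^ finrank ℝ E = π ^ ((finrank ℝ E : ℝ) / 2) := by
    rw [sqrt_eq_rpow, ← rpow_mul_natCast pi_nonneg]
    ring_nf
  rw [integral_fun_norm_addHaar, Measure.real, InnerProductSpace.volume_ball, ENNReal.ofReal_one,
    one_pow, one_mul, ENNReal.toReal_ofReal (by positivity), h_sqrt_pi, nsmul_eq_mul]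
  simp only [smul_eq_mul]
  ring

lemma integral_Ioi_mul_exp_neg_mul_sq_div {σ T : ℝ} (hσ : 0 < σ) (hT : 0 < T) (f : ℝ → ℝ) :
    ∫ r in Ioi 0, f r * exp (-T * r ^ 2 / (2 * σ ^ 2)) =
      σ / √T * ∫ r in Ioi 0, f (r * σ / √T) * exp (-r ^ 2 / 2) := by
  have hs : 0 < σ / √T := div_pos hσ (sqrt_pos.mpr hT)
  have h_scale := integral_comp_mul_left_Ioi (fun r => f r * exp (-T * r ^ 2 / (2 * σ ^ 2))) 0 hs
  rw [mul_zero, smul_eq_mul, eq_inv_mul_iff_mul_eq₀ hs.ne'] at h_scale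
  rw [← h_scale]
  congr 1
  refine setIntegral_congr_fun measurableSet_Ioi fun r _ => ?_
  have h_exponent : -T * (σ / √T * r) ^ 2 / (2 * σ ^ 2) = -r ^ 2 / 2 := by
    field_simp
    rw [sq_sqrt hT.le]
  simp only [h_exponent]
  ring_nf

/-- The NML normalizing constant for the normal location family restricted to the
ball `B(0,U)` in `ℝ^d`:
`∫ exp(-T·max(‖μ‖-U,0)²/(2σ²)) dμ
  = (d·π^{d/2}/Γ(d/2+1)) · (U^d/d + (σ/√T)·∫_0^∞ (rσ/√T + U)^{d-1} e^{-r²/2} dr)`. -/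
theorem nml_normal_location_integral
    (d : ℕ) (hd : 1 ≤ d) (U σ : ℝ) (hU : 0 < U) (hσ : 0 < σ) (T : ℕ) (hT : 1 ≤ T) :
    (∫ μ : EuclideanSpace ℝ (Fin d),
        Real.exp (-(T : ℝ) * (max (‖μ‖ - U) 0) ^ 2 / (2 * σ ^ 2))) =
      ((d : ℝ) * Real.pi ^ ((d : ℝ) / 2) / Real.Gamma ((d : ℝ) / 2 + 1)) *
        (U ^ d / (d : ℝ) +
          (σ / Real.sqrt T) *
            ∫ r in Set.Ioi (0 : ℝ),
              (r * σ / Real.sqrt T + U) ^ (d - 1) * Real.exp (-r ^ 2 / 2)) := by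
  have : Nonempty (Fin d) := ⟨⟨0, hd⟩⟩
  have hT_pos : (0 : ℝ) < T := by exact_mod_cast hT
  have h_gauss_int : IntegrableOn
      (fun r => (r + U) ^ (d - 1) * exp (-T * r ^ 2 / (2 * σ ^ 2))) (Ioi 0) := by
    convert (integrable_add_pow_mul_exp_neg_mul_sq (by positivity : 0 < (T : ℝ) / (2 * σ ^ 2)) U
      (d - 1)).integrableOn using 5
    ring
  rw [InnerProductSpace.integral_fun_norm (fun y => exp (-T * max (y - U) 0 ^ 2 / (2 * σ ^ 2))),
    finrank_euclideanSpace_fin, integral_Ioi_pow_mul_comp_max_sub hU.le (d - 1) _ h_gauss_int,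
    integral_Ioi_mul_exp_neg_mul_sq_div hσ hT_pos, Nat.sub_add_cancel hd]
  simp [Nat.cast_sub hd]
end

section
/- The square loss ℓ(a, y) = ‖a - y‖²/2 on the Euclidean ball B(0, Y) ⊂ ℝ^d is η-mixable with η = 1/(4Y²) and the mean as substitution function: for every probability distribution P on B(0, Y) and every y ∈ B(0, Y), ‖E_{a∼P}[a] - y‖²/2 ≤ -4Y² · ln E_{a∼P}[ exp( -‖a - y‖²/(8Y²) ) ]. -/
/-!
For `c ≥ 0` and `2cR² ≤ 1` the function `t ↦ exp (-c t²)` has second derivative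
`exp (-c t²) · 2c (2ct² - 1) ≤ 0` on `[0, R]` and is decreasing there, so composed with the convex
function `a ↦ ‖a - y‖` it is concave on the ball `closedBall y R`. Jensen's inequality then gives
`E exp (-c ‖a - y‖²) ≤ exp (-c ‖E a - y‖²)`, and taking logarithms yields mixability.
For the theorem, `c = 1/(8Y²)` and `R = 2Y`: points of `B(0, Y)` lie within `2Y` of `y`.
-/

open MeasureTheory Real Metric Set

lemma hasDerivAt_exp_neg_mul_sq (c s : ℝ) :
    HasDerivAt (fun s => exp (-(c * s ^ 2))) (exp (-(c * s ^ 2)) * (-(2 * c * s))) s :=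
  (((hasDerivAt_pow 2 s).const_mul c).fun_neg.congr_deriv (by push_cast; ring)).exp

lemma concaveOn_exp_neg_mul_sq {c R : ℝ} (hc : 0 ≤ c) (hcR : 2 * c * R ^ 2 ≤ 1) :
    ConcaveOn ℝ (Icc 0 R) (fun s => exp (-(c * s ^ 2))) := by
  have hderiv :
      deriv (fun s => exp (-(c * s ^ 2))) = fun s => exp (-(c * s ^ 2)) * (-(2 * c * s)) :=
    funext fun s => (hasDerivAt_exp_neg_mul_sq c s).deriv
  have hderiv2 (s : ℝ) : HasDerivAt (deriv fun s => exp (-(c * s ^ 2)))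
      (exp (-(c * s ^ 2)) * (2 * c * (2 * c * s ^ 2 - 1))) s := by
    rw [hderiv]
    exact ((hasDerivAt_exp_neg_mul_sq c s).fun_mul
      ((hasDerivAt_id' s).const_mul (2 * c)).fun_neg).congr_deriv (by ring)
  refine concaveOn_of_deriv2_nonpos' (convex_Icc 0 R)
    (fun s _ => (hasDerivAt_exp_neg_mul_sq c s).differentiableAt.differentiableWithinAt)
    (fun s _ => (hderiv2 s).differentiableAt.differentiableWithinAt) fun s ⟨hs0, hsR⟩ => ?_
  rw [Function.iterate_succ_apply, Function.iterate_one, (hderiv2 s).deriv]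
  have : 2 * c * s ^ 2 ≤ 1 := hcR.trans' (by gcongr)
  exact mul_nonpos_of_nonneg_of_nonpos (exp_pos _).le
    (mul_nonpos_of_nonneg_of_nonpos (by positivity) (by linarith))

lemma antitoneOn_exp_neg_mul_sq {c : ℝ} (hc : 0 ≤ c) :
    AntitoneOn (fun s => exp (-(c * s ^ 2))) (Ici 0) := fun s hs t _ hst => by
  dsimp only
  gcongr

section NormedSpace

variable {E : Type*} [NormedAddCommGroup E]

lemma integrable_exp_neg_mul_norm_sub_sq [MeasurableSpace E] [OpensMeasurableSpace E]
    (P : Measure E) [IsFiniteMeasure P] {c : ℝ} (hc : 0 ≤ c) (y : E) :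
    Integrable (fun a => exp (-(c * ‖a - y‖ ^ 2))) P :=
  Integrable.of_bound (Continuous.aestronglyMeasurable (by fun_prop)) 1 <| .of_forall fun a => by
    rw [norm_of_nonneg (exp_pos _).le, exp_le_one_iff, neg_nonpos]
    positivity

variable [NormedSpace ℝ E]

lemma concaveOn_exp_neg_mul_norm_sub_sq {c R : ℝ} (hc : 0 ≤ c) (hcR : 2 * c * R ^ 2 ≤ 1)
    (y : E) : ConcaveOn ℝ (closedBall y R) (fun a => exp (-(c * ‖a - y‖ ^ 2))) := by
  have himage : (dist · y) '' closedBall y R ⊆ Icc 0 R := by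
    rintro _ ⟨a, ha, rfl⟩
    exact ⟨dist_nonneg, ha⟩
  have himage_convex : Convex ℝ ((dist · y) '' closedBall y R) :=
    (((convex_closedBall y R).isPreconnected.image _
      (continuous_id.dist continuous_const).continuousOn).ordConnected).convex
  simp_rw [← dist_eq_norm]
  exact ((concaveOn_exp_neg_mul_sq hc hcR).subset himage himage_convex).comp_convexOn
    (convexOn_dist y (convex_closedBall y R))
    ((antitoneOn_exp_neg_mul_sq hc).mono (himage.trans Icc_subset_Ici_self))

variable [CompleteSpace E] [SecondCountableTopology E] [MeasurableSpace E] [OpensMeasurableSpace E]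
  (P : Measure E) [IsProbabilityMeasure P]

lemma integral_exp_neg_mul_norm_sub_sq_le {c R : ℝ} (hc : 0 ≤ c) (hcR : 2 * c * R ^ 2 ≤ 1)
    {y : E} (hP : ∀ᵐ a ∂P, a ∈ closedBall y R) :
    ∫ a, exp (-(c * ‖a - y‖ ^ 2)) ∂P ≤ exp (-(c * ‖(∫ a, a ∂P) - y‖ ^ 2)) := by
  have hid : Integrable id P := Integrable.of_bound aestronglyMeasurable_id (‖y‖ + R) <|
    hP.mono fun a ha => (norm_le_norm_add_norm_sub' a y).trans <| by
      gcongr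
      exact mem_closedBall_iff_norm.mp ha
  exact (concaveOn_exp_neg_mul_norm_sub_sq hc hcR y).le_map_integral (by fun_prop)
    isClosed_closedBall hP hid (integrable_exp_neg_mul_norm_sub_sq P hc y)

lemma mul_norm_integral_sub_sq_le_neg_log {c R : ℝ} (hc : 0 ≤ c) (hcR : 2 * c * R ^ 2 ≤ 1)
    {y : E} (hP : ∀ᵐ a ∂P, a ∈ closedBall y R) :
    c * ‖(∫ a, a ∂P) - y‖ ^ 2 ≤ -log (∫ a, exp (-(c * ‖a - y‖ ^ 2)) ∂P) := by
  rw [le_neg, ← log_exp (-_)]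
  exact log_le_log (integral_exp_pos (integrable_exp_neg_mul_norm_sub_sq P hc y))
    (integral_exp_neg_mul_norm_sub_sq_le P hc hcR hP)

end NormedSpace

/-- The square loss `‖a-y‖²/2` on the Euclidean ball `B(0,Y) ⊂ ℝ^d` is
`1/(4Y²)`-mixable with the mean as substitution function: for every probability
distribution `P` supported on `B(0,Y)` and every `y ∈ B(0,Y)`,
`‖E_P[a] - y‖²/2 ≤ -4Y² · ln E_P[exp(-‖a-y‖²/(8Y²))]`. -/
theorem square_loss_mixable
    (d : ℕ) (Y : ℝ) (hY : 0 < Y)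
    (P : Measure (EuclideanSpace ℝ (Fin d))) [IsProbabilityMeasure P]
    (hsupp : ∀ᵐ a ∂P, ‖a‖ ≤ Y)
    (y : EuclideanSpace ℝ (Fin d)) (hy : ‖y‖ ≤ Y) :
    ‖(∫ a, a ∂P) - y‖ ^ 2 / 2 ≤
      -(4 * Y ^ 2) * Real.log (∫ a, Real.exp (-‖a - y‖ ^ 2 / (8 * Y ^ 2)) ∂P) := by
  have hcR : 2 * (8 * Y ^ 2)⁻¹ * (2 * Y) ^ 2 ≤ 1 := by field_simp; norm_num
  have hball : ∀ᵐ a ∂P, a ∈ closedBall y (2 * Y) := hsupp.mono fun a ha =>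
    mem_closedBall_iff_norm.mpr ((norm_sub_le a y).trans (by linarith))
  have hmix := mul_norm_integral_sub_sq_le_neg_log P (by positivity) hcR hball
  calc ‖(∫ a, a ∂P) - y‖ ^ 2 / 2 = 4 * Y ^ 2 * ((8 * Y ^ 2)⁻¹ * ‖(∫ a, a ∂P) - y‖ ^ 2) := by
        field_simp; ring
    _ ≤ 4 * Y ^ 2 * -log (∫ a, exp (-((8 * Y ^ 2)⁻¹ * ‖a - y‖ ^ 2)) ∂P) := by gcongr
    _ = _ := by simp_rw [neg_div, div_eq_inv_mul]; ring
end

section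
/- Let a_t, ã_t ∈ ℝ^d with ‖a_t - ã_t‖ ≤ 2Y_t, and let y_t ∈ ℝ^d with ‖y_t‖ = Y_t where Y_t = max_{s ≤ t} ‖y_s‖ is nondecreasing, and let ỹ_t = (Y_{t-1}/Y_t) y_t be the clipped data. Then ∑_{t=1}^T ( ½‖a_t - y_t‖² - ½‖ã_t - y_t‖² ) ≤ ∑_{t=1}^T ( ½‖a_t - ỹ_t‖² - ½‖ã_t - ỹ_t‖² ) + Y_T · max_{t ≤ T} ‖a_t - ã_t‖. -/
open Finset
open scoped RealInnerProductSpace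

/-- The clipping inequality: with `Y_t = max_{s ≤ t} ‖y_s‖` the running maximum
(`Y_0 = 0`), clipped data `yTil_t = (Y_{t-1}/Y_t)·y_t`, and actions satisfying
`‖a_t - aTil_t‖ ≤ 2Y_t`, the square-loss regret on the true data exceeds the one on the
clipped data by at most `Y_T · max_{t ≤ T} ‖a_t - aTil_t‖`. -/
theorem clipping_inequality
    (d T : ℕ) (hT : 1 ≤ T)
    (a aTil y yTil : ℕ → EuclideanSpace ℝ (Fin d)) (Y : ℕ → ℝ)
    (hY0 : Y 0 = 0) (hY : ∀ t, Y (t + 1) = max (Y t) ‖y (t + 1)‖)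
    (hclip : ∀ t ∈ Finset.Icc 1 T, ‖a t - aTil t‖ ≤ 2 * Y t)
    (hty : ∀ t ∈ Finset.Icc 1 T, yTil t = (Y (t - 1) / Y t) • y t) :
    ∑ t ∈ Finset.Icc 1 T, (‖a t - y t‖ ^ 2 / 2 - ‖aTil t - y t‖ ^ 2 / 2) ≤
      (∑ t ∈ Finset.Icc 1 T, (‖a t - yTil t‖ ^ 2 / 2 - ‖aTil t - yTil t‖ ^ 2 / 2))
        + Y T * (Finset.Icc 1 T).sup' (Finset.nonempty_Icc.mpr hT)
            (fun t => ‖a t - aTil t‖) := by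
  have Ynn : ∀ t, 0 ≤ Y t := by
    intro t
    induction t with
    | zero => simp [hY0]
    | succ n ih => rw [hY]; exact le_trans ih (le_max_left _ _)
  set M := (Finset.Icc 1 T).sup' (Finset.nonempty_Icc.mpr hT) (fun t => ‖a t - aTil t‖)
    with hM
  have hMnn : 0 ≤ M :=
    le_trans (norm_nonneg (a 1 - aTil 1))
      (Finset.le_sup' (f := fun t => ‖a t - aTil t‖) (Finset.mem_Icc.mpr ⟨le_refl 1, hT⟩))
  have key : ∀ t ∈ Finset.Icc 1 T,
      ‖a t - y t‖ ^ 2 / 2 - ‖aTil t - y t‖ ^ 2 / 2 ≤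
        (‖a t - yTil t‖ ^ 2 / 2 - ‖aTil t - yTil t‖ ^ 2 / 2) + (Y t - Y (t - 1)) * M := by
    intro t ht
    obtain ⟨ht1, htT⟩ := Finset.mem_Icc.mp ht
    obtain ⟨s, rfl⟩ : ∃ s, t = s + 1 := ⟨t - 1, (Nat.succ_pred_eq_of_pos ht1).symm⟩
    have hs : (s + 1 : ℕ) - 1 = s := by omega
    -- bound on ‖y - yTil‖
    have hyle : ‖y (s + 1)‖ ≤ Y (s + 1) := by rw [hY]; exact le_max_right _ _
    have hYle : Y s ≤ Y (s + 1) := by rw [hY]; exact le_max_left _ _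
    have hyy : ‖y (s + 1) - yTil (s + 1)‖ ≤ Y (s + 1) - Y s := by
      have h1 : y (s + 1) - yTil (s + 1) = (1 - Y s / Y (s + 1)) • y (s + 1) := by
        rw [hty _ ht, hs, sub_smul, one_smul]
      rw [h1, norm_smul, Real.norm_eq_abs]
      rcases eq_or_lt_of_le (Ynn (s + 1)) with h0 | hpos
      · have hy0 : ‖y (s + 1)‖ = 0 := le_antisymm (by rw [← h0] at hyle; exact hyle)
          (norm_nonneg _)
        have hYs : Y s = 0 := le_antisymm (by rw [← h0] at hYle; exact hYle) (Ynn s)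
        simp [hy0, hYs, ← h0]
      · have hr1 : Y s / Y (s + 1) ≤ 1 := (div_le_one hpos).mpr hYle
        have hr0 : 0 ≤ Y s / Y (s + 1) := div_nonneg (Ynn s) (le_of_lt hpos)
        rw [abs_of_nonneg (by linarith)]
        calc (1 - Y s / Y (s + 1)) * ‖y (s + 1)‖
            ≤ (1 - Y s / Y (s + 1)) * Y (s + 1) := by
              apply mul_le_mul_of_nonneg_left hyle; linarith
          _ = Y (s + 1) - Y s := by field_simp
    -- the exact identity
    have e1 := @norm_sub_sq_real (EuclideanSpace ℝ (Fin d)) _ _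
      (a (s + 1) - yTil (s + 1)) (y (s + 1) - yTil (s + 1))
    have e2 := @norm_sub_sq_real (EuclideanSpace ℝ (Fin d)) _ _
      (aTil (s + 1) - yTil (s + 1)) (y (s + 1) - yTil (s + 1))
    rw [sub_sub_sub_cancel_right] at e1 e2
    have h3 := @inner_sub_left ℝ (EuclideanSpace ℝ (Fin d)) _ _ _
      (a (s + 1)) (yTil (s + 1)) (y (s + 1) - yTil (s + 1))
    have h4 := @inner_sub_left ℝ (EuclideanSpace ℝ (Fin d)) _ _ _
      (aTil (s + 1)) (yTil (s + 1)) (y (s + 1) - yTil (s + 1))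
    have h5 := @inner_sub_left ℝ (EuclideanSpace ℝ (Fin d)) _ _ _
      (aTil (s + 1)) (a (s + 1)) (y (s + 1) - yTil (s + 1))
    have hid : ‖a (s + 1) - y (s + 1)‖ ^ 2 / 2 - ‖aTil (s + 1) - y (s + 1)‖ ^ 2 / 2 =
        (‖a (s + 1) - yTil (s + 1)‖ ^ 2 / 2 - ‖aTil (s + 1) - yTil (s + 1)‖ ^ 2 / 2) +
          ⟪aTil (s + 1) - a (s + 1), y (s + 1) - yTil (s + 1)⟫ := by
      linear_combination e1 / 2 - e2 / 2 - h5 - h3 + h4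
    rw [hid, hs]
    gcongr
    calc ⟪aTil (s + 1) - a (s + 1), y (s + 1) - yTil (s + 1)⟫
        ≤ ‖aTil (s + 1) - a (s + 1)‖ * ‖y (s + 1) - yTil (s + 1)‖ := real_inner_le_norm _ _
      _ ≤ (Y (s + 1) - Y s) * M := by
          rw [norm_sub_rev, mul_comm]
          apply mul_le_mul hyy (Finset.le_sup' (f := fun t => ‖a t - aTil t‖) ht) (norm_nonneg _) (by linarith)
  have tele : ∀ n : ℕ, ∑ t ∈ Finset.Icc 1 n, (Y t - Y (t - 1)) = Y n := by
    intro n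
    induction n with
    | zero => simp [hY0]
    | succ m ih =>
        rw [Finset.sum_Icc_succ_top (by omega), ih]
        simp
  calc ∑ t ∈ Finset.Icc 1 T, (‖a t - y t‖ ^ 2 / 2 - ‖aTil t - y t‖ ^ 2 / 2)
      ≤ ∑ t ∈ Finset.Icc 1 T,
          ((‖a t - yTil t‖ ^ 2 / 2 - ‖aTil t - yTil t‖ ^ 2 / 2) + (Y t - Y (t - 1)) * M) :=
        Finset.sum_le_sum key
    _ = (∑ t ∈ Finset.Icc 1 T, (‖a t - yTil t‖ ^ 2 / 2 - ‖aTil t - yTil t‖ ^ 2 / 2))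
          + (∑ t ∈ Finset.Icc 1 T, (Y t - Y (t - 1))) * M := by
        rw [Finset.sum_add_distrib, Finset.sum_mul]
    _ = _ := by rw [tele T, mul_comm]
end

section
/- Let y_1, …, y_T be i.i.d. random variables taking values ±Y with probability ½ each, and let (a_t) be any sequence of predictions where a_t is measurable with respect to y_1,…,y_{t-1}. Then for any U > 0, E[ max_{θ ∈ {-U, U}} ∑_{t=1}^T ((a_t - y_t)² - (θ - y_t)²) ] ≥ U·E|∑_{t=1}^T y_t| - T U². -/
open MeasureTheory Finset

/-- A function measurable w.r.t. `comap g` is constant on fibers of `g`. -/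
lemma comap_measurable_const_on_fibers {Ω β : Type*} [mβ : MeasurableSpace β]
    {g : Ω → β} {f : Ω → ℝ}
    (hf : @Measurable Ω ℝ (MeasurableSpace.comap g mβ) _ f)
    {ω ω' : Ω} (h : g ω = g ω') : f ω = f ω' := by
  have hs : MeasurableSet[MeasurableSpace.comap g mβ] (f ⁻¹' {f ω}) :=
    hf (measurableSet_singleton _)
  obtain ⟨B, -, hB⟩ := hs
  have hω : ω ∈ g ⁻¹' B := by
    rw [hB]; exact Set.mem_singleton _
  have hω' : ω' ∈ g ⁻¹' B := by
    simpa [Set.mem_preimage, ← h] using hω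
  rw [hB] at hω'
  exact (Set.mem_singleton_iff.mp hω').symm

/-- `max (c + x) (c - x) = c + |x|`. -/
lemma max_add_sub_eq_add_abs (c x : ℝ) : max (c + x) (c - x) = c + |x| := by
  rcases le_total 0 x with h | h
  · rw [abs_of_nonneg h, max_eq_left (by linarith)]
  · rw [abs_of_nonpos h, max_eq_right (by linarith)]; ring

/-- Expectation lower bound for square-loss prediction against i.i.d. `±Y` labels:
if `y_1,…,y_T` are independent with `ℙ(y_t = Y) = ℙ(y_t = -Y) = ½` and each
prediction `a_t` is measurable w.r.t. `y_1,…,y_{t-1}`, then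
`E[max_{θ∈{-U,U}} ∑_t ((a_t - y_t)² - (θ - y_t)²)] ≥ U·E|∑_t y_t| - T U²`. -/
theorem square_loss_bayesian_lower_bound
    {Ω : Type*} [MeasurableSpace Ω] (P : Measure Ω) [IsProbabilityMeasure P]
    (T : ℕ) (Y U : ℝ) (hY : 0 < Y) (hU : 0 < U)
    (y : ℕ → Ω → ℝ) (hmeas : ∀ t, Measurable (y t))
    (hindep : ProbabilityTheory.iIndepFun y P)
    (hdist : ∀ t, P {ω | y t ω = Y} = 1 / 2 ∧ P {ω | y t ω = -Y} = 1 / 2)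
    (a : ℕ → Ω → ℝ)
    (hadapt : ∀ t, @Measurable Ω ℝ
      (MeasurableSpace.comap (fun ω => fun s : Fin t => y s ω) inferInstance) _ (a t)) :
    U * (∫ ω, |∑ t ∈ Finset.range T, y t ω| ∂P) - (T : ℝ) * U ^ 2 ≤
      ∫ ω, max
          (∑ t ∈ Finset.range T, ((a t ω - y t ω) ^ 2 - (U - y t ω) ^ 2))
          (∑ t ∈ Finset.range T, ((a t ω - y t ω) ^ 2 - (-U - y t ω) ^ 2)) ∂P := by
  classical
  have hYne : Y ≠ -Y := by intro h; linarith
  -- measurable sets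
  have hAmeas : ∀ t, MeasurableSet {ω | y t ω = Y} := fun t =>
    (hmeas t) (measurableSet_singleton Y)
  have hBmeas : ∀ t, MeasurableSet {ω | y t ω = -Y} := fun t =>
    (hmeas t) (measurableSet_singleton (-Y))
  -- a.e. each y t takes values in {Y, -Y}
  have hae : ∀ t, ∀ᵐ ω ∂P, y t ω = Y ∨ y t ω = -Y := by
    intro t
    have hdisj : Disjoint {ω | y t ω = Y} {ω | y t ω = -Y} := by
      rw [Set.disjoint_left]
      intro ω h1 h2
      exact hYne (h1.symm.trans h2)
    have hU1 : P ({ω | y t ω = Y} ∪ {ω | y t ω = -Y}) = 1 := by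
      rw [measure_union hdisj (hBmeas t), (hdist t).1, (hdist t).2]
      exact ENNReal.add_halves 1
    have hcompl : P ({ω | y t ω = Y} ∪ {ω | y t ω = -Y})ᶜ = 0 := by
      rw [prob_compl_eq_zero_iff ((hAmeas t).union (hBmeas t))]
      exact hU1
    rw [ae_iff]
    have hsets : {ω | ¬(y t ω = Y ∨ y t ω = -Y)} = ({ω | y t ω = Y} ∪ {ω | y t ω = -Y})ᶜ := by
      ext ω
      simp [Set.mem_union, not_or]
    rw [hsets]
    exact hcompl
  -- each y t is a.e. bounded by Y
  have hybd : ∀ t, ∀ᵐ ω ∂P, ‖y t ω‖ ≤ Y := by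
    intro t
    filter_upwards [hae t] with ω hω
    rcases hω with h | h <;> rw [h] <;> simp [abs_of_pos hY, hY.le]
  have hyint : ∀ t, Integrable (y t) P :=
    fun t => (integrable_const Y).mono' (hmeas t).aestronglyMeasurable (hybd t)
  -- expectation of each y t is zero
  have hEy : ∀ t, ∫ ω, y t ω ∂P = 0 := by
    intro t
    have heq : y t =ᵐ[P] fun ω =>
        ({ω | y t ω = Y}).indicator (fun _ => Y) ω
          + ({ω | y t ω = -Y}).indicator (fun _ => (-Y)) ω := by
      filter_upwards [hae t] with ω hω
      rcases hω with h | h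
      · simp [Set.indicator_apply, h, hYne]
      · simp [Set.indicator_apply, h, Ne.symm hYne]
    rw [integral_congr_ae heq, integral_add
      ((integrable_const Y).indicator (hAmeas t))
      ((integrable_const (-Y)).indicator (hBmeas t)),
      integral_indicator_const _ (hAmeas t), integral_indicator_const _ (hBmeas t),
      measureReal_def, measureReal_def, (hdist t).1, (hdist t).2]
    norm_num
  -- each a t is a.e. bounded
  have habd : ∀ t, ∃ B : ℝ, ∀ᵐ ω ∂P, ‖a t ω‖ ≤ B := by
    intro t
    set g : Ω → (Fin t → ℝ) := fun ω => fun s : Fin t => y s ω with hg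
    set f : (Fin t → ℝ) → ℝ :=
      fun v => if h : ∃ ω, g ω = v then a t h.choose else 0 with hf
    have hfa : ∀ ω, a t ω = f (g ω) := by
      intro ω
      have h : ∃ ω', g ω' = g ω := ⟨ω, rfl⟩
      rw [hf]
      simp only [dif_pos h]
      exact (comap_measurable_const_on_fibers (hadapt t) h.choose_spec).symm
    have hF : (Set.pi Set.univ (fun _ : Fin t => ({Y, -Y} : Set ℝ))).Finite :=
      Set.Finite.pi (fun _ => (Set.finite_singleton (-Y)).insert Y)
    have him : ((fun v => |f v|) '' (Set.pi Set.univ (fun _ : Fin t => ({Y, -Y} : Set ℝ)))).Finite :=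
      hF.image _
    obtain ⟨B, hB⟩ := him.bddAbove
    refine ⟨B, ?_⟩
    have hall : ∀ᵐ ω ∂P, ∀ s : ℕ, s < t → (y s ω = Y ∨ y s ω = -Y) := by
      rw [MeasureTheory.ae_all_iff]
      intro s
      rcases lt_or_ge s t with hs | hs
      · filter_upwards [hae s] with ω hω _; exact hω
      · filter_upwards with ω hlt; omega
    filter_upwards [hall] with ω hω
    rw [hfa ω]
    refine hB ⟨g ω, ?_, rfl⟩
    intro s _
    rcases hω s s.isLt with h | h
    · exact Or.inl h
    · exact Or.inr h
  have hameas : ∀ t, Measurable (a t) := by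
    intro t
    exact (hadapt t).mono
      (measurable_iff_comap_le.mp (measurable_pi_lambda _ fun s => hmeas s)) le_rfl
  have haint : ∀ t, Integrable (a t) P := by
    intro t
    obtain ⟨B, hB⟩ := habd t
    exact (integrable_const B).mono' (hameas t).aestronglyMeasurable hB
  -- integrability of the products and squares
  have hayint : ∀ t, Integrable (fun ω => a t ω * y t ω) P := by
    intro t
    obtain ⟨B, hB⟩ := habd t
    refine (integrable_const (B * Y)).mono'
      ((hameas t).mul (hmeas t)).aestronglyMeasurable ?_
    filter_upwards [hB, hybd t] with ω h1 h2
    calc ‖a t ω * y t ω‖ = ‖a t ω‖ * ‖y t ω‖ := norm_mul _ _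
      _ ≤ B * Y := by
          apply mul_le_mul h1 h2 (norm_nonneg _) (le_trans (norm_nonneg _) h1)
  have hasqint : ∀ t, Integrable (fun ω => (a t ω) ^ 2) P := by
    intro t
    obtain ⟨B, hB⟩ := habd t
    refine (integrable_const (B ^ 2)).mono'
      ((hameas t).pow_const 2).aestronglyMeasurable ?_
    filter_upwards [hB] with ω h1
    have : ‖(a t ω) ^ 2‖ = ‖a t ω‖ ^ 2 := by
      rw [Real.norm_eq_abs, Real.norm_eq_abs, abs_pow]
    rw [this]
    exact pow_le_pow_left₀ (norm_nonneg _) h1 2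
  -- independence of a t and y t
  have hindep_ay : ∀ t, ProbabilityTheory.IndepFun (a t) (y t) P := by
    intro t
    have hdisj : Disjoint (Finset.range t) ({t} : Finset ℕ) := by
      simp [Finset.disjoint_singleton_right]
    have h1 := hindep.indepFun_finset (Finset.range t) ({t} : Finset ℕ) hdisj hmeas
    rw [ProbabilityTheory.IndepFun_iff_Indep] at h1 ⊢
    have hle1 : MeasurableSpace.comap (a t) inferInstance ≤
        MeasurableSpace.comap (fun ω => fun (i : (Finset.range t : Finset ℕ)) => y (i : ℕ) ω)
          inferInstance := by
      refine le_trans (Measurable.comap_le (hadapt t)) ?_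
      -- comap (fun ω s : Fin t => y s ω) ≤ comap (range-t tuple)
      have hcomp : (fun ω => fun s : Fin t => y s ω) =
          (fun (w : ↥(Finset.range t) → ℝ) =>
            fun s : Fin t => w ⟨(s : ℕ), Finset.mem_range.mpr s.isLt⟩)
          ∘ (fun ω => fun (i : (Finset.range t : Finset ℕ)) => y (i : ℕ) ω) := rfl
      rw [hcomp, ← MeasurableSpace.comap_comp]
      refine MeasurableSpace.comap_mono ?_
      exact measurable_iff_comap_le.mp
        (measurable_pi_lambda _ fun s => measurable_pi_apply _)
    have hle2 : MeasurableSpace.comap (y t) inferInstance ≤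
        MeasurableSpace.comap (fun ω => fun (i : (({t} : Finset ℕ) : Finset ℕ)) => y (i : ℕ) ω)
          inferInstance := by
      have hcomp : y t =
          (fun (w : ↥({t} : Finset ℕ) → ℝ) =>
            w ⟨t, Finset.mem_singleton_self t⟩)
          ∘ (fun ω => fun (i : (({t} : Finset ℕ) : Finset ℕ)) => y (i : ℕ) ω) := rfl
      rw [hcomp, ← MeasurableSpace.comap_comp]
      refine MeasurableSpace.comap_mono ?_
      exact measurable_iff_comap_le.mp (measurable_pi_apply _)
    exact ProbabilityTheory.indep_of_indep_of_le_right
      (ProbabilityTheory.indep_of_indep_of_le_left h1 hle1) hle2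
  have hEay : ∀ t, ∫ ω, a t ω * y t ω ∂P = 0 := by
    intro t
    rw [(hindep_ay t).integral_fun_mul_eq_mul_integral (hameas t).aestronglyMeasurable
      (hmeas t).aestronglyMeasurable, hEy t, mul_zero]
  -- abbreviations
  set g1 : Ω → ℝ := fun ω => ∑ t ∈ Finset.range T, (a t ω) ^ 2 with hg1
  set g2 : Ω → ℝ := fun ω => ∑ t ∈ Finset.range T, a t ω * y t ω with hg2
  set S : Ω → ℝ := fun ω => ∑ t ∈ Finset.range T, y t ω with hS
  -- pointwise identity for the max
  have hid : ∀ ω, max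
      (∑ t ∈ Finset.range T, ((a t ω - y t ω) ^ 2 - (U - y t ω) ^ 2))
      (∑ t ∈ Finset.range T, ((a t ω - y t ω) ^ 2 - (-U - y t ω) ^ 2))
      = g1 ω - 2 * g2 ω - (T : ℝ) * U ^ 2 + 2 * U * |S ω| := by
    intro ω
    have expand : ∀ θ : ℝ, ∑ t ∈ Finset.range T, ((a t ω - y t ω) ^ 2 - (θ - y t ω) ^ 2)
        = (g1 ω - 2 * g2 ω - (T : ℝ) * θ ^ 2) + 2 * θ * S ω := by
      intro θ
      have hterm : ∀ t ∈ Finset.range T, (a t ω - y t ω) ^ 2 - (θ - y t ω) ^ 2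
          = ((a t ω) ^ 2 - 2 * (a t ω * y t ω) - θ ^ 2) + 2 * θ * y t ω := by
        intro t _; ring
      rw [Finset.sum_congr rfl hterm, Finset.sum_add_distrib, Finset.sum_sub_distrib,
        Finset.sum_sub_distrib, ← Finset.mul_sum, ← Finset.mul_sum,
        Finset.sum_const, Finset.card_range]
      simp [hg1, hg2, hS]
    rw [expand U, expand (-U)]
    have h1 : (g1 ω - 2 * g2 ω - (T : ℝ) * (-U) ^ 2) + 2 * (-U) * S ω
        = (g1 ω - 2 * g2 ω - (T : ℝ) * U ^ 2) - 2 * U * S ω := by ring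
    rw [h1, max_add_sub_eq_add_abs]
    rw [abs_mul, abs_of_pos (by linarith : (0:ℝ) < 2 * U)]
  -- integrability
  have hg1int : Integrable g1 P := integrable_finset_sum _ (fun t _ => hasqint t)
  have hg2int : Integrable g2 P := integrable_finset_sum _ (fun t _ => hayint t)
  have hSint : Integrable S P := integrable_finset_sum _ (fun t _ => hyint t)
  have habsSint : Integrable (fun ω => |S ω|) P := hSint.abs
  -- rewrite the integral
  have hrw : ∫ ω, max
      (∑ t ∈ Finset.range T, ((a t ω - y t ω) ^ 2 - (U - y t ω) ^ 2))
      (∑ t ∈ Finset.range T, ((a t ω - y t ω) ^ 2 - (-U - y t ω) ^ 2)) ∂P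
      = (∫ ω, g1 ω ∂P) - 2 * (∫ ω, g2 ω ∂P) - (T : ℝ) * U ^ 2
        + 2 * U * ∫ ω, |S ω| ∂P := by
    rw [integral_congr_ae (Filter.Eventually.of_forall hid)]
    have h1 : Integrable (fun ω => 2 * g2 ω) P := hg2int.const_mul 2
    have h2 : Integrable (fun ω => g1 ω - 2 * g2 ω) P := hg1int.sub h1
    have h3 : Integrable (fun ω => g1 ω - 2 * g2 ω - (T : ℝ) * U ^ 2) P :=
      h2.sub (integrable_const _)
    have h4 : Integrable (fun ω => 2 * U * |S ω|) P := habsSint.const_mul _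
    rw [integral_add h3 h4, integral_sub h2 (integrable_const _), integral_sub hg1int h1,
      integral_const, integral_const_mul, integral_const_mul]
    simp
  -- compute ∫ g2 = 0
  have hEg2 : ∫ ω, g2 ω ∂P = 0 := by
    rw [hg2]
    rw [integral_finset_sum _ (fun t _ => hayint t)]
    exact Finset.sum_eq_zero fun t _ => hEay t
  have hEg1 : 0 ≤ ∫ ω, g1 ω ∂P :=
    integral_nonneg fun ω => Finset.sum_nonneg fun t _ => sq_nonneg _
  have hIabs : 0 ≤ ∫ ω, |S ω| ∂P := integral_nonneg fun ω => abs_nonneg _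
  rw [hrw, hEg2]
  have hUI : 0 ≤ U * ∫ ω, |S ω| ∂P := mul_nonneg hU.le hIabs
  have hSrw : (∫ ω, |∑ t ∈ Finset.range T, y t ω| ∂P) = ∫ ω, |S ω| ∂P := rfl
  rw [hSrw]
  linarith
end

section
/- Let y_1,…,y_T be i.i.d. Rademacher-type variables taking values ±Y with probability ½. Then for any U with √(2T)·U/Y ≤ 1/2 (equivalently T ≤ (1/8)(Y/U)²), any online prediction algorithm for the square loss with constant feature x_t = 1 suffers worst-case regret sup over sequences and over θ ∈ [-U, U] of R_T(θ) ≥ (√2/8)·U·Y·√T. -/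
open Finset

namespace SqLossLBAux

variable {T : ℕ}

def ee (σ : Fin T → Bool) (t : Fin T) : ℝ := if σ t then 1 else -1

def S (σ : Fin T → Bool) : ℝ := ∑ t, ee σ t

def flip (σ : Fin T → Bool) (m : Fin T) : Fin T → Bool := Function.update σ m (!σ m)

lemma flip_flip (σ : Fin T → Bool) (m : Fin T) : flip (flip σ m) m = σ := by
  funext j
  by_cases h : j = m <;> simp [flip, Function.update, h]

def flipEquiv (m : Fin T) : (Fin T → Bool) ≃ (Fin T → Bool) :=
  ⟨fun σ => flip σ m, fun σ => flip σ m, fun σ => flip_flip σ m, fun σ => flip_flip σ m⟩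

lemma sum_flip_neg (m : Fin T) (f : (Fin T → Bool) → ℝ)
    (hf : ∀ σ, f (flip σ m) = - f σ) : ∑ σ : Fin T → Bool, f σ = 0 := by
  have h := Equiv.sum_comp (flipEquiv m) f
  simp only [flipEquiv, Equiv.coe_fn_mk, hf] at h
  rw [Finset.sum_neg_distrib] at h
  linarith

lemma ee_flip (σ : Fin T → Bool) (m t : Fin T) :
    ee (flip σ m) t = (if t = m then -1 else 1) * ee σ t := by
  by_cases h : t = m
  · subst h
    simp only [ee, flip, Function.update_self, if_pos rfl]
    cases hh : σ t <;> simp [hh]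
  · simp [ee, flip, Function.update_of_ne h, h]

lemma ee_mul_self (σ : Fin T → Bool) (t : Fin T) : ee σ t * ee σ t = 1 := by
  unfold ee; split_ifs <;> norm_num

lemma card_cube : (Finset.univ : Finset (Fin T → Bool)).card = 2 ^ T := by
  simp [Finset.card_univ]

lemma sum_ee_mul (i j : Fin T) :
    ∑ σ : Fin T → Bool, ee σ i * ee σ j = if i = j then (2:ℝ)^T else 0 := by
  by_cases h : i = j
  · subst h
    rw [if_pos rfl]
    have hme : ∀ σ : Fin T → Bool, ee σ i * ee σ i = 1 := fun σ => ee_mul_self σ i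
    simp only [hme, Finset.sum_const, card_cube, nsmul_eq_mul]
    push_cast; ring
  · rw [if_neg h]
    apply sum_flip_neg i
    intro σ
    rw [ee_flip, ee_flip]
    rw [if_pos rfl, if_neg (Ne.symm h)]
    ring

lemma moment2 :
    ∑ σ : Fin T → Bool, (S σ)^2 = T * 2^T := by
  have expand : ∀ σ : Fin T → Bool, (S σ)^2 = ∑ i, ∑ j, ee σ i * ee σ j := by
    intro σ; rw [S, sq, Finset.sum_mul_sum]
  simp only [expand]
  rw [Finset.sum_comm]
  have h1 : ∀ i : Fin T, ∑ σ : Fin T → Bool, ∑ j, ee σ i * ee σ j = (2:ℝ)^T := by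
    intro i
    rw [Finset.sum_comm]
    simp only [sum_ee_mul]
    simp
  rw [Finset.sum_congr rfl fun i _ => h1 i]
  simp [mul_comm]

lemma expand4 (σ : Fin T → Bool) :
    (S σ)^4 = ∑ i, ∑ j, ∑ k, ∑ l, ee σ i * ee σ j * ee σ k * ee σ l := by
  have h : (S σ)^4 = ((S σ * S σ) * S σ) * S σ := by ring
  rw [h, S]
  simp only [Finset.sum_mul_sum, Finset.sum_mul, Finset.mul_sum]
  exact Finset.sum_congr rfl fun i _ => Finset.sum_congr rfl fun j _ =>
    Finset.sum_congr rfl fun k _ => Finset.sum_congr rfl fun l _ => by ring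

lemma sum_four_zero_of_odd (i j k l m : Fin T)
    (hodd : (if i = m then (-1:ℝ) else 1) * (if j = m then -1 else 1) *
      (if k = m then -1 else 1) * (if l = m then -1 else 1) = -1) :
    ∑ σ : Fin T → Bool, ee σ i * ee σ j * ee σ k * ee σ l = 0 := by
  apply sum_flip_neg m
  intro σ
  rw [ee_flip σ m i, ee_flip σ m j, ee_flip σ m k, ee_flip σ m l]
  linear_combination (ee σ i * ee σ j * ee σ k * ee σ l) * hodd

lemma ee_prod_le_one (σ : Fin T → Bool) (i j k l : Fin T) :
    ee σ i * ee σ j * ee σ k * ee σ l ≤ 1 := by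
  unfold ee; split_ifs <;> norm_num

lemma L4 (i j k l : Fin T) :
    ∑ σ : Fin T → Bool, ee σ i * ee σ j * ee σ k * ee σ l ≤
      (2:ℝ)^T * ((if i = j then (1:ℝ) else 0) * (if k = l then 1 else 0)
        + (if i = k then 1 else 0) * (if j = l then 1 else 0)
        + (if i = l then 1 else 0) * (if j = k then 1 else 0)) := by
  by_cases hgood : (i = j ∧ k = l) ∨ (i = k ∧ j = l) ∨ (i = l ∧ j = k)
  · have h1 : ∑ σ : Fin T → Bool, ee σ i * ee σ j * ee σ k * ee σ l ≤ (2:ℝ)^T := by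
      calc ∑ σ : Fin T → Bool, ee σ i * ee σ j * ee σ k * ee σ l
          ≤ ∑ _σ : Fin T → Bool, (1:ℝ) :=
            Finset.sum_le_sum fun σ _ => ee_prod_le_one σ i j k l
        _ = (2:ℝ)^T := by simp [card_cube]
    have hi1 : (0:ℝ) ≤ if i = j then (1:ℝ) else 0 := by split <;> norm_num
    have hi2 : (0:ℝ) ≤ if k = l then (1:ℝ) else 0 := by split <;> norm_num
    have hi3 : (0:ℝ) ≤ if i = k then (1:ℝ) else 0 := by split <;> norm_num
    have hi4 : (0:ℝ) ≤ if j = l then (1:ℝ) else 0 := by split <;> norm_num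
    have hi5 : (0:ℝ) ≤ if i = l then (1:ℝ) else 0 := by split <;> norm_num
    have hi6 : (0:ℝ) ≤ if j = k then (1:ℝ) else 0 := by split <;> norm_num
    have hpos : (0:ℝ) < 2^T := by positivity
    rcases hgood with ⟨h, h'⟩ | ⟨h, h'⟩ | ⟨h, h'⟩ <;> rw [if_pos h, if_pos h'] <;>
      nlinarith [mul_nonneg hi1 hi2, mul_nonneg hi3 hi4, mul_nonneg hi5 hi6]
  · push_neg at hgood
    obtain ⟨h1, h2, h3⟩ := hgood
    have hrhs : ((if i = j then (1:ℝ) else 0) * (if k = l then 1 else 0)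
        + (if i = k then 1 else 0) * (if j = l then 1 else 0)
        + (if i = l then 1 else 0) * (if j = k then 1 else 0)) = 0 := by
      by_cases hij : i = j
      · have hkl : k ≠ l := h1 hij
        by_cases hik : i = k
        · have hjl : j ≠ l := h2 hik
          by_cases hil : i = l
          · have hjk : j ≠ k := h3 hil
            simp [hij, hkl, hjl, hjk]
          · simp [hkl, hjl, hil]
        · by_cases hil : i = l
          · have hjk : j ≠ k := h3 hil
            simp [hkl, hik, hjk]
          · simp [hkl, hik, hil]
      · by_cases hik : i = k
        · have hjl : j ≠ l := h2 hik
          by_cases hil : i = l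
          · have hjk : j ≠ k := h3 hil
            simp [hij, hjl, hjk]
          · simp [hij, hjl, hil]
        · by_cases hil : i = l
          · have hjk : j ≠ k := h3 hil
            simp [hij, hik, hjk]
          · simp [hij, hik, hil]
    rw [hrhs, mul_zero]
    apply le_of_eq
    by_cases hij : i = j
    · have hkl : k ≠ l := h1 hij
      subst hij
      by_cases hik : i = k
      · subst hik
        exact sum_four_zero_of_odd i i i l i (by simp [Ne.symm hkl])
      · exact sum_four_zero_of_odd i i k l k (by simp [hik, Ne.symm hkl])
    · by_cases hik : i = k
      · have hjl : j ≠ l := h2 hik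
        have hkj : ¬ (k = j) := fun h => hij (hik.trans h)
        exact sum_four_zero_of_odd i j k l j (by simp [hij, hkj, Ne.symm hjl])
      · by_cases hil : i = l
        · have hjk : j ≠ k := h3 hil
          have hlj : ¬ (l = j) := fun h => hij (hil.trans h)
          exact sum_four_zero_of_odd i j k l j (by simp [hij, Ne.symm hjk, hlj])
        · exact sum_four_zero_of_odd i j k l i
            (by simp [Ne.symm hij, Ne.symm hik, Ne.symm hil])

lemma moment4 : ∑ σ : Fin T → Bool, (S σ)^4 ≤ 3 * T^2 * 2^T := by
  simp only [expand4]
  rw [Finset.sum_comm]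
  have step : ∀ i : Fin T, ∑ σ : Fin T → Bool, ∑ j, ∑ k, ∑ l,
      ee σ i * ee σ j * ee σ k * ee σ l
      = ∑ j, ∑ k, ∑ l, ∑ σ : Fin T → Bool, ee σ i * ee σ j * ee σ k * ee σ l := by
    intro i
    rw [Finset.sum_comm]
    refine Finset.sum_congr rfl fun j _ => ?_
    rw [Finset.sum_comm]
    refine Finset.sum_congr rfl fun k _ => ?_
    rw [Finset.sum_comm]
  simp only [step]
  have bound : ∑ i : Fin T, ∑ j, ∑ k, ∑ l, ∑ σ : Fin T → Bool,
      ee σ i * ee σ j * ee σ k * ee σ l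
      ≤ ∑ i : Fin T, ∑ j, ∑ k, ∑ l, (2:ℝ)^T *
        ((if i = j then (1:ℝ) else 0) * (if k = l then 1 else 0)
        + (if i = k then 1 else 0) * (if j = l then 1 else 0)
        + (if i = l then 1 else 0) * (if j = k then 1 else 0)) :=
    Finset.sum_le_sum fun i _ => Finset.sum_le_sum fun j _ =>
      Finset.sum_le_sum fun k _ => Finset.sum_le_sum fun l _ => L4 i j k l
  refine bound.trans ?_
  simp [mul_add, Finset.sum_add_distrib, ← Finset.mul_sum, Finset.sum_ite_eq]
  nlinarith [pow_pos (show (0:ℝ) < 2 by norm_num) T, sq_nonneg ((T:ℝ))]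

lemma abs_sum_lower (hT : 1 ≤ T) :
    (2:ℝ)^T * Real.sqrt T / Real.sqrt 3 ≤ ∑ σ : Fin T → Bool, |S σ| := by
  set A1 := ∑ σ : Fin T → Bool, |S σ| with hA1
  set A3 := ∑ σ : Fin T → Bool, |S σ| * (S σ)^2 with hA3
  have hA1nn : 0 ≤ A1 := Finset.sum_nonneg fun σ _ => abs_nonneg _
  have hA3nn : 0 ≤ A3 := Finset.sum_nonneg fun σ _ => by positivity
  have CS1 : ((T:ℝ) * 2^T)^2 ≤ A1 * A3 := by
    rw [← moment2]
    have h := Finset.sum_mul_sq_le_sq_mul_sq Finset.univ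
      (fun σ : Fin T → Bool => Real.sqrt |S σ|)
      (fun σ : Fin T → Bool => Real.sqrt |S σ| * |S σ|)
    have e1 : ∀ σ : Fin T → Bool,
        Real.sqrt |S σ| * (Real.sqrt |S σ| * |S σ|) = (S σ)^2 := by
      intro σ
      rw [← mul_assoc, Real.mul_self_sqrt (abs_nonneg _), ← sq_abs]
      ring
    have e2 : ∀ σ : Fin T → Bool, (Real.sqrt |S σ|)^2 = |S σ| :=
      fun σ => Real.sq_sqrt (abs_nonneg _)
    have e3 : ∀ σ : Fin T → Bool, (Real.sqrt |S σ| * |S σ|)^2 = |S σ| * (S σ)^2 := by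
      intro σ
      rw [mul_pow, Real.sq_sqrt (abs_nonneg _), sq_abs]
    simp only [e1, e2, e3] at h
    exact h
  have CS2 : A3^2 ≤ ((T:ℝ) * 2^T) * (3 * T^2 * 2^T) := by
    have h := Finset.sum_mul_sq_le_sq_mul_sq Finset.univ
      (fun σ : Fin T → Bool => |S σ|) (fun σ : Fin T → Bool => (S σ)^2)
    have e2 : ∀ σ : Fin T → Bool, |S σ|^2 = (S σ)^2 := fun σ => sq_abs _
    have e3 : ∀ σ : Fin T → Bool, ((S σ)^2)^2 = (S σ)^4 := fun σ => by ring
    simp only [e2, e3] at h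
    calc A3^2 ≤ (∑ σ : Fin T → Bool, (S σ)^2) * ∑ σ : Fin T → Bool, (S σ)^4 := h
      _ ≤ ((T:ℝ) * 2^T) * (3 * T^2 * 2^T) := by
          rw [moment2]
          have h2 : (0:ℝ) ≤ (T:ℝ) * 2^T := by positivity
          exact mul_le_mul_of_nonneg_left moment4 h2
  set rT := Real.sqrt T with hrT
  set s3 := Real.sqrt 3 with hs3
  have hrT2 : rT^2 = T := Real.sq_sqrt (by positivity)
  have hs32 : s3^2 = 3 := Real.sq_sqrt (by norm_num)
  have hrTpos : 0 < rT := Real.sqrt_pos.mpr (by exact_mod_cast hT)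
  have hs3pos : 0 < s3 := Real.sqrt_pos.mpr (by norm_num)
  have h2T : (0:ℝ) < 2^T := by positivity
  have hTpos : (0:ℝ) < T := by exact_mod_cast hT
  have hBpos : 0 < s3 * T * rT * 2^T :=
    mul_pos (mul_pos (mul_pos hs3pos hTpos) hrTpos) h2T
  have hB2 : (s3 * T * rT * 2^T)^2 = (T:ℝ) * 2^T * (3 * T^2 * 2^T) := by
    have h : (s3 * T * rT * 2^T)^2 = s3^2 * rT^2 * ((T:ℝ)^2 * (2^T)^2) := by ring
    rw [h, hs32, hrT2]; ring
  have hA3le : A3 ≤ s3 * T * rT * 2^T := by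
    nlinarith [CS2, hB2, hA3nn, hBpos, add_pos_of_nonneg_of_pos hA3nn hBpos]
  rw [div_le_iff₀ hs3pos]
  have key : ((T:ℝ) * 2^T)^2 ≤ A1 * (s3 * T * rT * 2^T) :=
    CS1.trans (mul_le_mul_of_nonneg_left hA3le hA1nn)
  have hpos : (0:ℝ) < (T:ℝ) * rT * 2^T := by positivity
  have h1 : (2^T * rT) * ((T:ℝ) * rT * 2^T) ≤ (A1 * s3) * ((T:ℝ) * rT * 2^T) := by
    calc (2^T*rT) * ((T:ℝ)*rT*2^T) = (T:ℝ)*rT^2*(2^T)^2 := by ring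
      _ = ((T:ℝ)*2^T)^2 := by rw [hrT2]; ring
      _ ≤ A1 * (s3 * T * rT * 2^T) := key
      _ = (A1*s3) * ((T:ℝ)*rT*2^T) := by ring
  exact le_of_mul_le_mul_right h1 hpos

def yf (Y : ℝ) (σ : Fin T → Bool) (n : ℕ) : ℝ :=
  if h : n < T then Y * ee σ ⟨n, h⟩ else Y

lemma sum_yf (Y : ℝ) (σ : Fin T → Bool) :
    ∑ n ∈ Finset.range T, yf Y σ n = Y * S σ := by
  rw [← Fin.sum_univ_eq_sum_range (fun n => yf Y σ n) T, S, Finset.mul_sum]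
  refine Finset.sum_congr rfl fun i _ => ?_
  simp [yf, i.isLt]

end SqLossLBAux

open SqLossLBAux in
/-- Worst-case regret lower bound for square-loss prediction with labels in `{-Y, Y}`
(constant feature `x_t = 1`): for any algorithm `A` (mapping the past labels to a
prediction), if `√(2T)·U/Y ≤ ½`, there is a label sequence and a comparator
`|θ| ≤ U` with regret at least `(√2/8)·U·Y·√T`. -/
theorem square_loss_worst_case_lower_bound
    (T : ℕ) (hT : 1 ≤ T) (U Y : ℝ) (hU : 0 < U) (hY : 0 < Y)
    (hcond : Real.sqrt (2 * T) * U / Y ≤ 1 / 2)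
    (A : List ℝ → ℝ) :
    ∃ y : ℕ → ℝ, (∀ t, y t = Y ∨ y t = -Y) ∧
      ∃ θ : ℝ, |θ| ≤ U ∧
        Real.sqrt 2 / 8 * U * Y * Real.sqrt T ≤
          ∑ t ∈ Finset.range T,
            ((A (List.ofFn fun s : Fin t => y s) - y t) ^ 2 / 2
              - (θ - y t) ^ 2 / 2) := by
  classical
  set c : ℝ := Real.sqrt 2 / 8 * U * Y * Real.sqrt T with hc
  set a : (Fin T → Bool) → ℕ → ℝ :=
    fun σ t => A (List.ofFn fun s : Fin t => yf Y σ s) with ha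
  set θf : (Fin T → Bool) → ℝ := fun σ => if 0 ≤ S σ then U else -U with hθf
  set R : (Fin T → Bool) → ℝ := fun σ => ∑ t ∈ Finset.range T,
    ((a σ t - yf Y σ t)^2/2 - (θf σ - yf Y σ t)^2/2) with hR
  -- Step 1 : pointwise lower bound
  have step1 : ∀ σ : Fin T → Bool,
      U * (Y * |S σ|) - T * U^2/2 - (∑ t ∈ Finset.range T, a σ t * yf Y σ t) ≤ R σ := by
    intro σ
    have hθ2 : (θf σ)^2 = U^2 := by
      by_cases h : 0 ≤ S σ <;> simp [θf, h]
    have hθS : θf σ * (Y * S σ) = U * (Y * |S σ|) := by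
      by_cases h : 0 ≤ S σ
      · rw [abs_of_nonneg h]; simp [θf, h]
      · rw [abs_of_neg (lt_of_not_ge h)]; simp [θf, h]
    have hterm : ∀ t ∈ Finset.range T, (a σ t - yf Y σ t)^2/2 - (θf σ - yf Y σ t)^2/2
        = (a σ t)^2/2 - U^2/2 + θf σ * yf Y σ t - a σ t * yf Y σ t := by
      intro t _
      linear_combination -hθ2 / 2
    have hexp : R σ = (∑ t ∈ Finset.range T, (a σ t)^2/2) - T * U^2/2
        + U * (Y * |S σ|) - ∑ t ∈ Finset.range T, a σ t * yf Y σ t := by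
      calc R σ = ∑ t ∈ Finset.range T,
            ((a σ t)^2/2 - U^2/2 + θf σ * yf Y σ t - a σ t * yf Y σ t) :=
              Finset.sum_congr rfl hterm
        _ = (∑ t ∈ Finset.range T, (a σ t)^2/2) - (∑ t ∈ Finset.range T, U^2/2)
            + θf σ * ∑ t ∈ Finset.range T, yf Y σ t
            - ∑ t ∈ Finset.range T, a σ t * yf Y σ t := by
            rw [Finset.sum_sub_distrib, Finset.sum_add_distrib, Finset.sum_sub_distrib,
              Finset.mul_sum]
        _ = _ := by
            rw [sum_yf, hθS]
            simp only [Finset.sum_const, Finset.card_range, nsmul_eq_mul]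
            ring
    have hnn : 0 ≤ ∑ t ∈ Finset.range T, (a σ t)^2/2 :=
      Finset.sum_nonneg fun t _ => by positivity
    linarith [hexp, hnn]
  -- Step 2 : the algorithm-dependent term averages to zero
  have step2 : ∑ σ : Fin T → Bool, (∑ t ∈ Finset.range T, a σ t * yf Y σ t) = 0 := by
    rw [Finset.sum_comm]
    refine Finset.sum_eq_zero fun t ht => ?_
    have htT : t < T := Finset.mem_range.mp ht
    apply sum_flip_neg ⟨t, htT⟩
    intro σ
    have hyt : yf Y (flip σ ⟨t, htT⟩) t = - yf Y σ t := by
      simp only [yf, dif_pos htT]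
      rw [ee_flip, if_pos rfl]
      ring
    have hys : ∀ s : Fin t, yf Y (flip σ ⟨t, htT⟩) s = yf Y σ s := by
      intro s
      have hsT : (s : ℕ) < T := lt_trans s.isLt htT
      simp only [yf, dif_pos hsT]
      rw [ee_flip, if_neg, one_mul]
      exact fun h => absurd (Fin.mk.inj_iff.mp h) (Nat.ne_of_lt s.isLt)
    have haa : a (flip σ ⟨t, htT⟩) t = a σ t := by
      simp only [ha]
      congr 1
      exact congrArg _ (funext hys)
    rw [haa, hyt]
    ring
  -- Step 3 : sum the pointwise bounds
  have step3 : (2:ℝ)^T * (U * Y * (Real.sqrt T / Real.sqrt 3) - T * U^2/2)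
      ≤ ∑ σ : Fin T → Bool, R σ := by
    have h1 : ∑ σ : Fin T → Bool,
        (U * (Y * |S σ|) - T * U^2/2 - (∑ t ∈ Finset.range T, a σ t * yf Y σ t))
        ≤ ∑ σ : Fin T → Bool, R σ := Finset.sum_le_sum fun σ _ => step1 σ
    have h2 : ∑ σ : Fin T → Bool,
        (U * (Y * |S σ|) - T * U^2/2 - (∑ t ∈ Finset.range T, a σ t * yf Y σ t))
        = U * Y * (∑ σ : Fin T → Bool, |S σ|) - (2:ℝ)^T * (T * U^2/2) := by
      rw [Finset.sum_sub_distrib, Finset.sum_sub_distrib, step2, ← Finset.mul_sum]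
      simp only [Finset.sum_const, Finset.card_univ, nsmul_eq_mul, ← Finset.mul_sum]
      simp [Fintype.card_fun]
      ring
    have h3 : (2:ℝ)^T * (U * Y * (Real.sqrt T / Real.sqrt 3))
        ≤ U * Y * (∑ σ : Fin T → Bool, |S σ|) := by
      have := abs_sum_lower (T := T) hT
      have hUY : 0 ≤ U * Y := by positivity
      calc (2:ℝ)^T * (U * Y * (Real.sqrt T / Real.sqrt 3))
          = U * Y * ((2:ℝ)^T * Real.sqrt T / Real.sqrt 3) := by ring
        _ ≤ U * Y * (∑ σ : Fin T → Bool, |S σ|) := mul_le_mul_of_nonneg_left this hUY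
    calc (2:ℝ)^T * (U * Y * (Real.sqrt T / Real.sqrt 3) - T * U^2/2)
        = (2:ℝ)^T * (U * Y * (Real.sqrt T / Real.sqrt 3)) - (2:ℝ)^T * (T * U^2/2) := by
          ring
      _ ≤ U * Y * (∑ σ : Fin T → Bool, |S σ|) - (2:ℝ)^T * (T * U^2/2) := by linarith
      _ = _ := h2.symm
      _ ≤ ∑ σ : Fin T → Bool, R σ := h1
  -- Step 4 : numeric inequality  c ≤ U Y √T/√3 − T U²/2
  have step4 : c ≤ U * Y * (Real.sqrt T / Real.sqrt 3) - T * U^2/2 := by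
    set rT := Real.sqrt T with hrT
    set s2 := Real.sqrt 2 with hs2
    set s3 := Real.sqrt 3 with hs3
    have hrT2 : rT^2 = T := Real.sq_sqrt (by positivity)
    have hs22 : s2^2 = 2 := Real.sq_sqrt (by norm_num)
    have hs32 : s3^2 = 3 := Real.sq_sqrt (by norm_num)
    have hrTpos : 0 < rT := Real.sqrt_pos.mpr (by exact_mod_cast hT)
    have hs2pos : 0 < s2 := Real.sqrt_pos.mpr (by norm_num)
    have hs3pos : 0 < s3 := Real.sqrt_pos.mpr (by norm_num)
    have hsplit : Real.sqrt (2 * T) = s2 * rT := by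
      rw [hs2, hrT, ← Real.sqrt_mul (by norm_num)]
    have hc1 : s2 * rT * U ≤ Y / 2 := by
      rw [div_le_iff₀ hY] at hcond
      calc s2 * rT * U = Real.sqrt (2 * T) * U := by rw [hsplit]
        _ ≤ 1 / 2 * Y := hcond
        _ = Y / 2 := by ring
    have hs6 : s2 * s3 ≤ 4 := by
      nlinarith [hs22, hs32, hs2pos.le, hs3pos.le]
    have hdiv : rT / s3 = rT * s3 / 3 := by
      rw [div_eq_div_iff hs3pos.ne' (by norm_num : (3:ℝ) ≠ 0)]
      linear_combination -rT * hs32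
    have h1 : s2 * (rT^2 * U^2) ≤ rT * U * Y / 2 := by
      have h := mul_le_mul_of_nonneg_left hc1 (mul_pos hrTpos hU).le
      calc s2 * (rT^2*U^2) = rT * U * (s2 * rT * U) := by ring
        _ ≤ rT * U * (Y/2) := h
        _ = rT * U * Y / 2 := by ring
    have h2 : rT^2 * U^2 / 2 ≤ s2 * rT * U * Y / 8 := by
      have h := mul_le_mul_of_nonneg_left h1 hs2pos.le
      have e : s2*(s2*(rT^2*U^2)) = 2*(rT^2*U^2) := by
        calc s2*(s2*(rT^2*U^2)) = s2^2*(rT^2*U^2) := by ring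
          _ = 2*(rT^2*U^2) := by rw [hs22]
      rw [e] at h
      linarith
    have h3 : 3 * s2 ≤ 4 * s3 := by
      have h := mul_le_mul_of_nonneg_right hs6 hs3pos.le
      have e : (s2*s3)*s3 = 3*s2 := by
        calc (s2*s3)*s3 = s2*s3^2 := by ring
          _ = 3*s2 := by rw [hs32]; ring
      rw [e] at h
      linarith
    have h4 : U * Y * (rT * s2 / 4) ≤ U * Y * (rT * s3 / 3) := by
      have h5 : s2/4 ≤ s3/3 := by linarith
      have h := mul_le_mul_of_nonneg_left h5
        (mul_nonneg (mul_nonneg hU.le hY.le) hrTpos.le)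
      calc U*Y*(rT*s2/4) = U*Y*rT*(s2/4) := by ring
        _ ≤ U*Y*rT*(s3/3) := h
        _ = U*Y*(rT*s3/3) := by ring
    rw [hdiv, ← hrT2, hc]
    linarith [h2, h4]
  -- Step 5 : extract a good sequence
  have card2 : ∑ _σ : Fin T → Bool, c = (2:ℝ)^T * c := by
    simp only [Finset.sum_const, Finset.card_univ, Fintype.card_fun, Fintype.card_bool,
      Fintype.card_fin, nsmul_eq_mul]
    push_cast
    ring
  have hsum : ∑ _σ : Fin T → Bool, c ≤ ∑ σ : Fin T → Bool, R σ := by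
    rw [card2]
    calc (2:ℝ)^T * c
        ≤ (2:ℝ)^T * (U * Y * (Real.sqrt T / Real.sqrt 3) - T * U^2/2) :=
          mul_le_mul_of_nonneg_left step4 (by positivity)
      _ ≤ ∑ σ : Fin T → Bool, R σ := step3
  obtain ⟨σ, -, hσ⟩ := Finset.exists_le_of_sum_le
    ⟨(fun _ => true), Finset.mem_univ _⟩ hsum
  refine ⟨yf Y σ, ?_, θf σ, ?_, ?_⟩
  · intro t
    by_cases h : t < T
    · cases hh : σ ⟨t, h⟩
      · right; simp [yf, dif_pos h, ee, hh]
      · left; simp [yf, dif_pos h, ee, hh]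
    · left; simp [yf, h]
  · by_cases h : 0 ≤ S σ
    · simp [θf, h, abs_of_pos hU]
    · simp [θf, h, abs_of_pos hU]
  · exact hσ
end
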